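/- arXiv:2603.22514 — 3 statements merged into one kernel-verified Lean document; each statement's English description precedes it below -/
import Mathlib

section
/- Let A ∈ ℝ^{k×n} be a binary (n,k,δ,γ) regular assignment matrix (each column of A has exactly δ ones and each row exactly γ ones). Let B be the random-diagonal encoding matrix built from A with parameter ε ∈ [0,1). Let 𝓕 ⊆ {1,…,n} with |𝓕| = n−s be a non-straggler set such that B_𝓕^T B_𝓕 is almost surely invertible. Let X be a random variable uniform on S and c := E[X²]·E[1/X²]. Let Δ_𝓕 := A_𝓕^T A_𝓕, let Δ_𝓕^{diag} be the diagonal matrix with the same diagonal entries as Δ_𝓕, and set K := Δ_𝓕 + c(m−1)Δ_𝓕^{diag}, assumed invertible. Then the expected approximation error satisfies E[Err_𝓕(B)] ≤ mk − m·1_k^T A_𝓕 K^{−1} A_𝓕^T 1_k. -/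
open MeasureTheory Matrix

noncomputable section

/-- The set `S = [1-ε, 1+ε] ∪ [-1-ε, -1+ε]`. -/
def Sset (ε : ℝ) : Set ℝ := Set.Icc (1 - ε) (1 + ε) ∪ Set.Icc (-1 - ε) (-1 + ε)

/-- The uniform probability distribution on `Sset ε`; for `ε = 0` this is the uniform
distribution on `{-1, 1}`. -/
noncomputable def uniformS (ε : ℝ) : Measure ℝ :=
  if ε = 0 then (2 : ENNReal)⁻¹ • (Measure.dirac (1 : ℝ) + Measure.dirac (-1 : ℝ))
  else (volume (Sset ε))⁻¹ • volume.restrict (Sset ε)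

/-- Joint law of the diagonal entries of the i.i.d. random diagonal matrices
`D_1, …, D_m` (the entry of `D_i` at position `j` is `d (i, j)`). -/
noncomputable def μD (m : ℕ) (ν : Type*) [Fintype ν] (ε : ℝ) :
    Measure ((Fin m × ν) → ℝ) :=
  Measure.pi fun _ => uniformS ε

/-- Random-diagonal encoding matrix: the vertical stack of `A * D_1, …, A * D_m`,
with rows indexed by `Fin m × κ` (block `i`, row `r`). -/
def encB {m : ℕ} {κ ν : Type*} (A : Matrix κ ν ℝ) (d : (Fin m × ν) → ℝ) :
    Matrix (Fin m × κ) ν ℝ :=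
  Matrix.of fun p j => A p.2 j * d (p.1, j)

/-- The target matrix `F = [f_1 | … | f_m]`, where `f_i` is `1` on the `i`-th block. -/
def Fmat (m : ℕ) (κ : Type*) : Matrix (Fin m × κ) (Fin m) ℝ :=
  Matrix.of fun p i => if p.1 = i then 1 else 0

/-- Column submatrix corresponding to the non-straggler set `𝓕`. -/
def subCols {α ν : Type*} (M : Matrix α ν ℝ) (𝓕 : Finset ν) : Matrix α ↥𝓕 ℝ :=
  M.submatrix id (fun j => (j : ν))

/-- Squared Frobenius norm. -/
def frobSq {α β : Type*} [Fintype α] [Fintype β] (M : Matrix α β ℝ) : ℝ :=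
  ∑ i, ∑ j, (M i j) ^ 2

/-- The approximation error `Err_𝓕(B) = inf_R ‖B_𝓕 R − F‖_F²`. -/
noncomputable def err {m : ℕ} {κ ν : Type*} [Fintype κ] [Fintype ν]
    (B : Matrix (Fin m × κ) ν ℝ) (𝓕 : Finset ν) : ℝ :=
  ⨅ R : Matrix ↥𝓕 (Fin m) ℝ, frobSq (subCols B 𝓕 * R - Fmat m κ)

/-!
Bound the infimum by the decoder `R` whose `i`-th column is `D_i⁻¹ w` on `𝓕`, with
`w = K⁻¹ A_𝓕ᵀ 1`. Block `l` of the `i`-th column of `B_𝓕 R` is `A_𝓕 D_l D_i⁻¹ w`: for `l = i` it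
is the deterministic vector `A_𝓕 w`, and for `l ≠ i` its entries are combinations of the ratios
`d(l,u) / d(i,u)`, which are pairwise orthogonal (flipping the sign of `d(l,u)` preserves the law)
and have second moment `c`. The expected error of `R` is therefore
`m (‖A_𝓕 w - 1‖² + c (m - 1) wᵀ Δ^{diag} w) = m (k - 2 · 1ᵀ A_𝓕 w + wᵀ K w)`,
and `K w = A_𝓕ᵀ 1` turns this into `m (k - 1ᵀ A_𝓕 K⁻¹ A_𝓕ᵀ 1)`.
-/

section PiMeasure

variable {ι : Type*} [Fintype ι] {μ : Measure ℝ}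

theorem integral_pi_eval_mul_eval [IsProbabilityMeasure μ] {p q : ι} (hpq : p ≠ q)
    (f g : ℝ → ℝ) :
    ∫ d, f (d p) * g (d q) ∂(Measure.pi fun _ => μ) = (∫ x, f x ∂μ) * ∫ x, g x ∂μ := by
  classical
  let h : ι → ℝ → ℝ := fun r => if r = p then f else if r = q then g else fun _ => 1
  have hp : h p = f := if_pos rfl
  have hq : h q = g := by simp [h, hpq.symm]
  have hrest : ∀ r, r ≠ p ∧ r ≠ q → h r = fun _ => 1 := fun r hr => by simp [h, hr.1, hr.2]
  calc ∫ d, f (d p) * g (d q) ∂(Measure.pi fun _ => μ)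
      = ∫ d, ∏ r, h r (d r) ∂(Measure.pi fun _ => μ) := by
        congr 1 with d
        rw [Fintype.prod_eq_mul p q hpq fun r hr => by rw [hrest r hr], hp, hq]
    _ = ∏ r, ∫ x, h r x ∂μ := integral_fintype_prod_eq_prod h
    _ = (∫ x, f x ∂μ) * ∫ x, g x ∂μ := by
        rw [Fintype.prod_eq_mul p q hpq fun r hr => by simp [hrest r hr], hp, hq]

theorem integral_pi_div_mul_div_self [IsProbabilityMeasure μ] {p q : ι} (hpq : p ≠ q) :
    ∫ d, d p / d q * (d p / d q) ∂(Measure.pi fun _ => μ) =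
      (∫ x, x ^ 2 ∂μ) * ∫ x, (x ^ 2)⁻¹ ∂μ := by
  rw [← integral_pi_eval_mul_eval hpq]
  congr 1 with d
  ring

variable [DecidableEq ι] [SigmaFinite μ]

theorem measurePreserving_update_neg (hμ : μ.map Neg.neg = μ) (q : ι) :
    MeasurePreserving (fun d : ι → ℝ => Function.update d q (-d q))
      (Measure.pi fun _ => μ) (Measure.pi fun _ => μ) := by
  have hcoord : ∀ p, MeasurePreserving (if p = q then (Neg.neg : ℝ → ℝ) else id) μ μ := by
    intro p
    split_ifs
    · exact ⟨measurable_neg, hμ⟩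
    · exact MeasurePreserving.id μ
  convert measurePreserving_pi _ _ hcoord using 1
  ext d p
  by_cases hp : p = q <;> simp [hp]

theorem integral_pi_eq_zero_of_odd (hμ : μ.map Neg.neg = μ) (q : ι) {F : (ι → ℝ) → ℝ}
    (hF : ∀ d, F (Function.update d q (-d q)) = -F d) :
    ∫ d, F d ∂(Measure.pi fun _ => μ) = 0 := by
  have hinv : Function.Involutive fun d : ι → ℝ => Function.update d q (-d q) := fun d => by
    simp
  have := (measurePreserving_update_neg hμ q).integral_comp
    (MeasurableEquiv.ofInvolutive _ hinv
      (measurePreserving_update_neg hμ q).measurable).measurableEmbedding F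
  simp only [hF, integral_neg] at this
  linarith

theorem integral_pi_div_mul_div_eq_zero (hμ : μ.map Neg.neg = μ) {p q p' q' : ι}
    (hq : p ≠ q) (hp' : p ≠ p') (hq' : p ≠ q') :
    ∫ d, d p / d q * (d p' / d q') ∂(Measure.pi fun _ => μ) = 0 :=
  integral_pi_eq_zero_of_odd hμ p fun d => by
    simp [hq.symm, hp'.symm, hq'.symm, neg_div]

end PiMeasure

section UniformS

variable {ε : ℝ}

theorem measurableSet_Sset (ε : ℝ) : MeasurableSet (Sset ε) :=
  measurableSet_Icc.union measurableSet_Icc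

theorem volume_Sset_ne_top (ε : ℝ) : volume (Sset ε) ≠ ⊤ :=
  (measure_union_lt_top (by simp) (by simp)).ne

theorem volume_Sset_ne_zero (hε : 0 < ε) : volume (Sset ε) ≠ 0 := by
  refine (ne_of_gt (lt_of_lt_of_le ?_ (measure_mono Set.subset_union_left)))
  simp [Real.volume_Icc, hε]

theorem preimage_neg_Sset (ε : ℝ) : Neg.neg ⁻¹' Sset ε = Sset ε := by
  ext x
  simp only [Sset, Set.mem_preimage, Set.mem_union, Set.mem_Icc]
  grind

theorem isProbabilityMeasure_uniformS (hε : 0 ≤ ε) : IsProbabilityMeasure (uniformS ε) := by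
  constructor
  rcases hε.eq_or_lt with rfl | hε
  · simp [uniformS, ENNReal.inv_two_add_inv_two]
  · simp [uniformS, hε.ne',
      ENNReal.inv_mul_cancel (volume_Sset_ne_zero hε) (volume_Sset_ne_top ε)]

theorem ae_mem_Sset_uniformS (hε : 0 ≤ ε) : ∀ᵐ x ∂uniformS ε, x ∈ Sset ε := by
  rcases hε.eq_or_lt with rfl | hε
  · simp [uniformS, ae_add_measure_iff, Sset]
  · simp only [uniformS, if_neg hε.ne']
    exact Measure.ae_smul_measure (ae_restrict_mem (measurableSet_Sset ε)) _

theorem map_neg_uniformS (hε : 0 ≤ ε) : (uniformS ε).map Neg.neg = uniformS ε := by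
  rcases hε.eq_or_lt with rfl | hε
  · simp only [uniformS, ↓reduceIte, Measure.map_smul, Measure.map_add _ _ measurable_neg,
      Measure.map_dirac' measurable_neg, neg_neg, add_comm]
  · simp only [uniformS, if_neg hε.ne', Measure.map_smul]
    congr 1
    conv_lhs => rw [← preimage_neg_Sset ε]
    rw [← Measure.restrict_map measurable_neg (measurableSet_Sset ε),
      (Measure.measurePreserving_neg (volume : Measure ℝ)).map_eq]

theorem abs_mem_Icc_of_mem_Sset (hε : ε < 1) {x : ℝ} (hx : x ∈ Sset ε) :
    |x| ∈ Set.Icc (1 - ε) (1 + ε) := by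
  rcases hx with ⟨h₁, h₂⟩ | ⟨h₁, h₂⟩
  · rw [abs_of_nonneg (by linarith)]; exact ⟨h₁, h₂⟩
  · rw [abs_of_nonpos (by linarith)]; constructor <;> linarith

theorem ne_zero_of_mem_Sset (hε : ε < 1) {x : ℝ} (hx : x ∈ Sset ε) : x ≠ 0 :=
  abs_pos.1 ((sub_pos.2 hε).trans_le (abs_mem_Icc_of_mem_Sset hε hx).1)

theorem abs_div_le_of_mem_Sset (hε : ε < 1) {x y : ℝ} (hx : x ∈ Sset ε) (hy : y ∈ Sset ε) :
    |x / y| ≤ (1 + ε) / (1 - ε) := by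
  rw [abs_div]
  have hx' := abs_mem_Icc_of_mem_Sset hε hx
  exact div_le_div₀ ((abs_nonneg x).trans hx'.2) hx'.2 (by linarith)
    (abs_mem_Icc_of_mem_Sset hε hy).1

end UniformS

section RandomDiagonal

variable {m : ℕ} {ν : Type*} [Fintype ν] {ε : ℝ}

theorem isProbabilityMeasure_μD (hε : 0 ≤ ε) : IsProbabilityMeasure (μD m ν ε) := by
  have := isProbabilityMeasure_uniformS hε
  unfold μD
  infer_instance

theorem ae_forall_mem_Sset (hε : 0 ≤ ε) : ∀ᵐ d ∂μD m ν ε, ∀ p, d p ∈ Sset ε := by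
  have := isProbabilityMeasure_uniformS hε
  exact ae_all_iff.2 fun _ => Measure.tendsto_eval_ae_ae.eventually (ae_mem_Sset_uniformS hε)

theorem memLp_div_eval (hε0 : 0 ≤ ε) (hε1 : ε < 1) (p q : Fin m × ν) (r : ENNReal) :
    MemLp (fun d => d p / d q) r (μD m ν ε) := by
  have := isProbabilityMeasure_μD (m := m) (ν := ν) hε0
  refine MemLp.of_bound (Measurable.aestronglyMeasurable (by fun_prop)) ((1 + ε) / (1 - ε)) ?_
  filter_upwards [ae_forall_mem_Sset hε0] with d hd
  exact abs_div_le_of_mem_Sset hε1 (hd p) (hd q)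

theorem integral_sq_sum_div_eval (hε0 : 0 ≤ ε) (hε1 : ε < 1) {l i : Fin m} (hli : l ≠ i)
    {ι : Type*} [Fintype ι] {j : ι → ν} (hj : Function.Injective j) (b : ι → ℝ) :
    ∫ d, (∑ u, b u * (d (l, j u) / d (i, j u))) ^ 2 ∂μD m ν ε =
      (∫ x, x ^ 2 ∂uniformS ε) * (∫ x, (x ^ 2)⁻¹ ∂uniformS ε) * ∑ u, b u ^ 2 := by
  classical
  have := isProbabilityMeasure_uniformS hε0
  set Z : ι → ((Fin m × ν) → ℝ) → ℝ := fun u d => d (l, j u) / d (i, j u)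
  have hZZ : ∀ u u', Integrable (fun d => Z u d * Z u' d) (μD m ν ε) := fun u u' =>
    (memLp_div_eval hε0 hε1 _ _ 2).integrable_mul (memLp_div_eval hε0 hε1 _ _ 2)
  have hEZZ : ∀ u u', ∫ d, Z u d * Z u' d ∂μD m ν ε =
      if u = u' then (∫ x, x ^ 2 ∂uniformS ε) * ∫ x, (x ^ 2)⁻¹ ∂uniformS ε else 0 := by
    intro u u'
    split_ifs with h
    · subst h
      exact integral_pi_div_mul_div_self (by simp [hli])
    · exact integral_pi_div_mul_div_eq_zero (map_neg_uniformS hε0) (by simp [hli])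
        (by simp [hj.ne h]) (by simp [hli])
  calc ∫ d, (∑ u, b u * Z u d) ^ 2 ∂μD m ν ε
      = ∫ d, ∑ u, ∑ u', b u * b u' * (Z u d * Z u' d) ∂μD m ν ε := by
        congr 1 with d
        rw [sq, Finset.sum_mul_sum]
        exact Finset.sum_congr rfl fun _ _ => Finset.sum_congr rfl fun _ _ => by ring
    _ = ∑ u, ∑ u', b u * b u' * ∫ d, Z u d * Z u' d ∂μD m ν ε := by
        rw [integral_finsetSum _ fun u _ =>
          integrable_finsetSum _ fun u' _ => (hZZ u u').const_mul _]
        refine Finset.sum_congr rfl fun u _ => ?_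
        rw [integral_finsetSum _ fun u' _ => (hZZ u u').const_mul _]
        exact Finset.sum_congr rfl fun u' _ => integral_const_mul _ _
    _ = _ := by
        simp only [hEZZ, mul_ite, mul_zero, Finset.sum_ite_eq, Finset.mem_univ, if_true,
          Finset.mul_sum, sq]
        exact Finset.sum_congr rfl fun _ _ => by ring

end RandomDiagonal

section Decoding

variable {m : ℕ} {κ ν : Type*}

theorem frobSq_nonneg {α β : Type*} [Fintype α] [Fintype β] (M : Matrix α β ℝ) :
    0 ≤ frobSq M :=
  Finset.sum_nonneg fun _ _ => Finset.sum_nonneg fun _ _ => sq_nonneg _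

theorem err_nonneg [Fintype κ] [Fintype ν] (B : Matrix (Fin m × κ) ν ℝ) (𝓕 : Finset ν) :
    0 ≤ err B 𝓕 :=
  le_ciInf fun _ => frobSq_nonneg _

theorem err_le_frobSq [Fintype κ] [Fintype ν] (B : Matrix (Fin m × κ) ν ℝ) (𝓕 : Finset ν)
    (R : Matrix 𝓕 (Fin m) ℝ) :
    err B 𝓕 ≤ frobSq (subCols B 𝓕 * R - Fmat m κ) :=
  ciInf_le ⟨0, by rintro _ ⟨R, rfl⟩; exact frobSq_nonneg _⟩ R

def ratioDecoder {𝓕 : Finset ν} (w : 𝓕 → ℝ) (d : (Fin m × ν) → ℝ) : Matrix 𝓕 (Fin m) ℝ :=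
  Matrix.of fun u i => w u / d (i, u)

theorem encB_mul_ratioDecoder_sub_Fmat_apply (A : Matrix κ ν ℝ) (d : (Fin m × ν) → ℝ)
    {𝓕 : Finset ν} (w : 𝓕 → ℝ) (p : Fin m × κ) (i : Fin m) :
    (subCols (encB A d) 𝓕 * ratioDecoder w d - Fmat m κ) p i =
      ∑ u, subCols A 𝓕 p.2 u * w u * (d (p.1, u) / d (i, u)) - if p.1 = i then 1 else 0 := by
  simp only [Matrix.sub_apply, Matrix.mul_apply, subCols, encB, Fmat, ratioDecoder,
    Matrix.submatrix_apply, Matrix.of_apply, id_eq]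
  congr 1
  exact Finset.sum_congr rfl fun _ _ => by ring

theorem frobSq_encB_mul_ratioDecoder_sub_Fmat [Fintype κ] (A : Matrix κ ν ℝ) (𝓕 : Finset ν)
    (w : 𝓕 → ℝ) (d : (Fin m × ν) → ℝ) :
    frobSq (subCols (encB A d) 𝓕 * ratioDecoder w d - Fmat m κ) =
      ∑ p : Fin m × κ, ∑ i, (∑ u : 𝓕, subCols A 𝓕 p.2 u * w u * (d (p.1, u) / d (i, u)) -
        if p.1 = i then 1 else 0) ^ 2 := by
  simp only [frobSq, encB_mul_ratioDecoder_sub_Fmat_apply]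

end Decoding

section ExpectedError

variable {m : ℕ} {ν : Type*} [Fintype ν] {ε : ℝ}

theorem integrable_sq_sum_div_eval_sub (hε0 : 0 ≤ ε) (hε1 : ε < 1) (l i : Fin m)
    {ι : Type*} [Fintype ι] (j : ι → ν) (b : ι → ℝ) (t : ℝ) :
    Integrable (fun d => (∑ u, b u * (d (l, j u) / d (i, j u)) - t) ^ 2) (μD m ν ε) := by
  have := isProbabilityMeasure_μD (m := m) (ν := ν) hε0
  refine MemLp.integrable_sq (MemLp.sub ?_ (memLp_const t))
  exact memLp_finsetSum _ fun u _ => (memLp_div_eval hε0 hε1 _ _ 2).const_mul (b u)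

theorem integral_sq_sum_div_eval_sub (hε0 : 0 ≤ ε) (hε1 : ε < 1) (l i : Fin m)
    {ι : Type*} [Fintype ι] {j : ι → ν} (hj : Function.Injective j) (b : ι → ℝ) :
    ∫ d, (∑ u, b u * (d (l, j u) / d (i, j u)) - if l = i then 1 else 0) ^ 2 ∂μD m ν ε =
      if l = i then (∑ u, b u - 1) ^ 2
      else (∫ x, x ^ 2 ∂uniformS ε) * (∫ x, (x ^ 2)⁻¹ ∂uniformS ε) * ∑ u, b u ^ 2 := by
  split_ifs with hli
  · subst hli
    have := isProbabilityMeasure_μD (m := m) (ν := ν) hε0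
    rw [integral_congr_ae (g := fun _ => (∑ u, b u - 1) ^ 2), integral_const, probReal_univ,
      one_smul]
    filter_upwards [ae_forall_mem_Sset hε0] with d hd
    simp [div_self (ne_zero_of_mem_Sset hε1 (hd _))]
  · simpa using integral_sq_sum_div_eval hε0 hε1 hli hj b

variable {κ : Type*} [Fintype κ]

theorem integrable_frobSq_encB_mul_ratioDecoder_sub_Fmat (hε0 : 0 ≤ ε) (hε1 : ε < 1)
    (A : Matrix κ ν ℝ) (𝓕 : Finset ν) (w : 𝓕 → ℝ) :
    Integrable (fun d => frobSq (subCols (encB A d) 𝓕 * ratioDecoder w d - Fmat m κ))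
      (μD m ν ε) := by
  simp only [frobSq_encB_mul_ratioDecoder_sub_Fmat]
  exact integrable_finsetSum _ fun p _ => integrable_finsetSum _ fun i _ =>
    integrable_sq_sum_div_eval_sub hε0 hε1 p.1 i _ _ _

theorem sum_ite_eq_add_mul (l : Fin m) (x y : ℝ) :
    ∑ i, (if l = i then x else y) = x + ((m : ℝ) - 1) * y := by
  calc ∑ i, (if l = i then x else y) = ∑ i, (y + if l = i then x - y else 0) :=
        Finset.sum_congr rfl fun i _ => by split_ifs <;> ring
    _ = x + ((m : ℝ) - 1) * y := by simp [Finset.sum_add_distrib]; ring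

theorem integral_frobSq_encB_mul_ratioDecoder_sub_Fmat (hε0 : 0 ≤ ε) (hε1 : ε < 1)
    (A : Matrix κ ν ℝ) (𝓕 : Finset ν) (w : 𝓕 → ℝ) :
    ∫ d, frobSq (subCols (encB A d) 𝓕 * ratioDecoder w d - Fmat m κ) ∂μD m ν ε =
      m * ∑ r, (((subCols A 𝓕 *ᵥ w) r - 1) ^ 2 +
        (∫ x, x ^ 2 ∂uniformS ε) * (∫ x, (x ^ 2)⁻¹ ∂uniformS ε) * ((m : ℝ) - 1) *
          ∑ u, (subCols A 𝓕 r u * w u) ^ 2) := by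
  simp only [frobSq_encB_mul_ratioDecoder_sub_Fmat]
  rw [integral_finsetSum _ fun p _ => integrable_finsetSum _ fun i _ =>
    integrable_sq_sum_div_eval_sub hε0 hε1 p.1 i _ _ _]
  simp only [integral_finsetSum _ fun i _ => integrable_sq_sum_div_eval_sub hε0 hε1 _ i _ _ _,
    integral_sq_sum_div_eval_sub hε0 hε1 _ _ Subtype.val_injective, sum_ite_eq_add_mul,
    Fintype.sum_prod_type, Finset.sum_const, Finset.card_univ, Fintype.card_fin, nsmul_eq_mul]
  congr 1
  exact Finset.sum_congr rfl fun r _ => by simp only [mulVec, dotProduct]; ring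

end ExpectedError

section QuadraticForm

variable {κ ι : Type*} [Fintype κ] [Fintype ι] [DecidableEq ι]

theorem sum_sq_mulVec_sub_one_add_eq (M : Matrix κ ι ℝ) (t : ℝ) {w : ι → ℝ}
    (hw : (Mᵀ * M + t • diagonal fun u => (Mᵀ * M) u u) *ᵥ w = Mᵀ *ᵥ fun _ => 1) :
    ∑ r, (((M *ᵥ w) r - 1) ^ 2 + t * ∑ u, (M r u * w u) ^ 2) =
      Fintype.card κ - (fun _ => 1) ⬝ᵥ (M *ᵥ w) := by
  have hΔ : w ⬝ᵥ ((Mᵀ * M) *ᵥ w) = ∑ r, (M *ᵥ w) r ^ 2 := by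
    rw [← mulVec_mulVec, dotProduct_mulVec, vecMul_transpose]
    simp only [dotProduct, sq]
  have hdiag : w ⬝ᵥ ((diagonal fun u => (Mᵀ * M) u u) *ᵥ w) = ∑ r, ∑ u, (M r u * w u) ^ 2 := by
    simp only [dotProduct, mulVec_diagonal, mul_apply, transpose_apply]
    rw [Finset.sum_comm]
    refine Finset.sum_congr rfl fun _ _ => ?_
    rw [Finset.sum_mul, Finset.mul_sum]
    exact Finset.sum_congr rfl fun _ _ => by ring
  have hlin : (fun _ => 1) ⬝ᵥ (M *ᵥ w) = w ⬝ᵥ (Mᵀ *ᵥ fun _ => 1) := by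
    rw [dotProduct_mulVec, ← mulVec_transpose, dotProduct_comm]
  have hquad := congrArg (w ⬝ᵥ ·) hw
  simp only [add_mulVec, dotProduct_add, smul_mulVec, dotProduct_smul, smul_eq_mul, hΔ,
    hdiag, ← hlin] at hquad
  simp only [Finset.sum_add_distrib, ← Finset.mul_sum, sub_sq, Finset.sum_sub_distrib]
  simp only [dotProduct, one_mul, Finset.sum_const, Finset.card_univ, nsmul_eq_mul, mul_one,
    one_pow, ← Finset.mul_sum] at hquad ⊢
  linarith

end QuadraticForm

theorem stmt0_general (n k m : ℕ)
    (ε : ℝ) (hε0 : 0 ≤ ε) (hε1 : ε < 1)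
    (A : Matrix (Fin k) (Fin n) ℝ)
    (𝓕 : Finset (Fin n))
    (c : ℝ) (hc : c = (∫ x, x ^ 2 ∂uniformS ε) * ∫ x, (x ^ 2)⁻¹ ∂uniformS ε)
    (Δ : Matrix ↥𝓕 ↥𝓕 ℝ) (hΔ : Δ = (subCols A 𝓕)ᵀ * subCols A 𝓕)
    (K : Matrix ↥𝓕 ↥𝓕 ℝ)
    (hK : K = Δ + (c * ((m : ℝ) - 1)) • Matrix.diagonal (fun u => Δ u u))
    (hKinv : IsUnit K.det) :
    ∫ d, err (encB A d) 𝓕 ∂(μD m (Fin n) ε) ≤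
      (m : ℝ) * k -
        (m : ℝ) *
          ((fun _ => (1 : ℝ)) ⬝ᵥ ((subCols A 𝓕 * K⁻¹ * (subCols A 𝓕)ᵀ) *ᵥ fun _ => 1)) := by
  set w := K⁻¹ *ᵥ ((subCols A 𝓕)ᵀ *ᵥ fun _ => 1)
  have hKw : K *ᵥ w = (subCols A 𝓕)ᵀ *ᵥ fun _ => 1 := by
    rw [mulVec_mulVec, mul_nonsing_inv _ hKinv, one_mulVec]
  have hquad : (fun _ => (1 : ℝ)) ⬝ᵥ ((subCols A 𝓕 * K⁻¹ * (subCols A 𝓕)ᵀ) *ᵥ fun _ => 1) =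
      (fun _ => 1) ⬝ᵥ (subCols A 𝓕 *ᵥ w) := by
    rw [← mulVec_mulVec, ← mulVec_mulVec]
  subst hc hΔ hK
  calc ∫ d, err (encB A d) 𝓕 ∂μD m (Fin n) ε
      ≤ ∫ d, frobSq (subCols (encB A d) 𝓕 * ratioDecoder w d - Fmat m (Fin k)) ∂μD m (Fin n) ε :=
        integral_mono_of_nonneg (ae_of_all _ fun _ => err_nonneg _ _)
          (integrable_frobSq_encB_mul_ratioDecoder_sub_Fmat hε0 hε1 A 𝓕 w)
          (ae_of_all _ fun _ => err_le_frobSq _ _ _)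
    _ = m * (k - (fun _ => 1) ⬝ᵥ (subCols A 𝓕 *ᵥ w)) := by
        rw [integral_frobSq_encB_mul_ratioDecoder_sub_Fmat hε0 hε1,
          sum_sq_mulVec_sub_one_add_eq _ _ hKw, Fintype.card_fin]
    _ = _ := by rw [hquad]; ring

/-- Lemma 1: expected-error upper bound for the random-diagonal
construction with a binary `(n,k,δ,γ)` regular assignment matrix. -/
theorem stmt0 (n k m s δ γ : ℕ) (hm : 0 < m) (hs : s ≤ n)
    (ε : ℝ) (hε0 : 0 ≤ ε) (hε1 : ε < 1)
    (A : Matrix (Fin k) (Fin n) ℝ)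
    (hbin : ∀ i j, A i j = 0 ∨ A i j = 1)
    (hcol : ∀ j, ∑ i, A i j = (δ : ℝ))
    (hrow : ∀ i, ∑ j, A i j = (γ : ℝ))
    (𝓕 : Finset (Fin n)) (hcard : 𝓕.card = n - s)
    (hinv : ∀ᵐ d ∂(μD m (Fin n) ε),
      IsUnit ((subCols (encB A d) 𝓕)ᵀ * subCols (encB A d) 𝓕).det)
    (c : ℝ) (hc : c = (∫ x, x ^ 2 ∂uniformS ε) * ∫ x, (x ^ 2)⁻¹ ∂uniformS ε)
    (Δ : Matrix ↥𝓕 ↥𝓕 ℝ) (hΔ : Δ = (subCols A 𝓕)ᵀ * subCols A 𝓕)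
    (K : Matrix ↥𝓕 ↥𝓕 ℝ)
    (hK : K = Δ + (c * ((m : ℝ) - 1)) • Matrix.diagonal (fun u => Δ u u))
    (hKinv : IsUnit K.det) :
    ∫ d, err (encB A d) 𝓕 ∂(μD m (Fin n) ε) ≤
      (m : ℝ) * k -
        (m : ℝ) *
          ((fun _ => (1 : ℝ)) ⬝ᵥ ((subCols A 𝓕 * K⁻¹ * (subCols A 𝓕)ᵀ) *ᵥ fun _ => 1)) :=
  stmt0_general n k m ε hε0 hε1 A 𝓕 c hc Δ hΔ K hK hKinv

end
end

section
/- Let A ∈ ℝ^{n×n} be the adjacency matrix of a vertex-transitive strongly regular graph with parameters (n,δ,λ,μ) satisfying 0 < δ and δ ≠ μ, used as the assignment matrix (k = n). Let B be the random-diagonal encoding matrix built from A with parameter ε = 0. Let 𝓕 be the random non-straggler set in which each worker index is included independently with probability 1−q, q ∈ [0,1), independent of the diagonal matrices, and let R := (B_𝓕^T B_𝓕)^{−1} B_𝓕^T F when 𝓕 ≠ ∅ with B_𝓕 R := 0 when 𝓕 = ∅. Then E_D[E_𝓕[B_𝓕 R]] = β F for some nonzero real constant β. -/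
open MeasureTheory Matrix

noncomputable section

/-- Bernoulli measure on `Bool`: `true` (non-straggler) with probability `1 - q`. -/
noncomputable def bern (q : ℝ) : Measure Bool :=
  ENNReal.ofReal (1 - q) • Measure.dirac true + ENNReal.ofReal q • Measure.dirac false

/-- Law of the random non-straggler set: each worker is included independently
with probability `1 - q`. -/
noncomputable def μF (ν : Type*) [Fintype ν] (q : ℝ) : Measure (ν → Bool) :=
  Measure.pi fun _ => bern q

/-- The (random) non-straggler set determined by the indicators `ω`. -/
def finsetOf {ν : Type*} [Fintype ν] (ω : ν → Bool) : Finset ν :=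
  Finset.univ.filter fun j => ω j = true

/-- `B_𝓕 R` for the least-squares optimal decoder `R = (B_𝓕ᵀ B_𝓕)⁻¹ B_𝓕ᵀ F`
when `𝓕 ≠ ∅`, and `0` when `𝓕 = ∅`. -/
noncomputable def projMat {m : ℕ} {κ ν : Type*} [Fintype κ] [Fintype ν] [DecidableEq ν]
    (B : Matrix (Fin m × κ) ν ℝ) (𝓕 : Finset ν) : Matrix (Fin m × κ) (Fin m) ℝ :=
  if 𝓕 = ∅ then 0
  else subCols B 𝓕 * ((subCols B 𝓕)ᵀ * subCols B 𝓕)⁻¹ * ((subCols B 𝓕)ᵀ * Fmat m κ)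

/-!
With `ε = 0` both expectations are finite averages, over sign patterns `s ∈ {±1}^(m×n)` and
straggler patterns `ω`. For `𝓕 ≠ ∅`, `B_𝓕 R = Π F` where `Π` is the orthogonal projection onto
the column space of `B_𝓕`. Negating block `k` of `D` conjugates `Π` by a diagonal `±1` matrix, so
the entries of column `k` outside block `k` average to zero. Permuting the blocks, and relabelling
vertices by automorphisms (vertex-transitivity), shows that all entries of column `i` in block `i`
share one value `β`. Finally the SRG identity makes `A` invertible, so each `B_𝓕ᵀ B_𝓕` is positive
definite and the sum of the block-`i` entries of column `i` of `Π F` is a positive quadratic form;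
hence `n β > 0`.
-/

open scoped ENNReal

section DiracSums

variable {α β : Type*} [MeasurableSpace α] [Fintype β]

theorem integral_sum_smul_dirac [MeasurableSingletonClass α] (c : β → ℝ≥0∞) (hc : ∀ b, c b ≠ ∞)
    (x : β → α) (f : α → ℝ) :
    ∫ a, f a ∂(∑ b, c b • Measure.dirac (x b)) = ∑ b, (c b).toReal * f (x b) := by
  rw [integral_finsetSum_measure fun b _ => (integrable_dirac (by simp)).smul_measure (hc b)]
  simp [integral_smul_measure, integral_dirac]

theorem MeasureTheory.Measure.pi_sum_smul_dirac {ι : Type*} [Fintype ι] [DecidableEq ι]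
    (c : β → ℝ≥0∞) (hc : ∀ b, c b ≠ ∞) (x : β → α) :
    Measure.pi (fun _ : ι => ∑ b, c b • Measure.dirac (x b)) =
      ∑ s : ι → β, (∏ i, c (s i)) • Measure.dirac (x ∘ s) := by
  have : IsFiniteMeasure (∑ b, c b • Measure.dirac (x b)) :=
    ⟨by simpa [ENNReal.sum_lt_top, lt_top_iff_ne_top] using hc⟩
  refine Measure.pi_eq fun t ht => ?_
  simp only [Measure.finsetSum_apply, Measure.smul_apply, smul_eq_mul,
    Measure.dirac_apply' _ (ht _), Measure.dirac_apply' _ (MeasurableSet.univ_pi ht),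
    Finset.prod_univ_sum]
  refine Finset.sum_congr rfl fun s _ => ?_
  rw [Finset.prod_mul_distrib]
  congr 1
  simpa using Set.indicator_pi_one_apply Finset.univ t (x ∘ s)

end DiracSums

def signVec {ι : Type*} (s : ι → Bool) : ι → ℝ := fun i => if s i then 1 else -1

theorem signVec_ne_zero {ι : Type*} (s : ι → Bool) (i : ι) : signVec s i ≠ 0 := by
  unfold signVec; split_ifs <;> norm_num

theorem integral_μD_zero {m : ℕ} {ν : Type*} [Fintype ν] [DecidableEq ν]
    (f : ((Fin m × ν) → ℝ) → ℝ) :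
    ∫ d, f d ∂μD m ν 0 = (2⁻¹ : ℝ) ^ Fintype.card (Fin m × ν) * ∑ s, f (signVec s) := by
  have h : uniformS 0 =
      ∑ b : Bool, (2⁻¹ : ℝ≥0∞) • Measure.dirac (if b then (1 : ℝ) else -1) := by
    simp [uniformS]
  rw [μD, h, Measure.pi_sum_smul_dirac _ (by simp), integral_sum_smul_dirac _ (by simp),
    Finset.mul_sum]
  refine Finset.sum_congr rfl fun s _ => ?_
  simp only [Finset.prod_const, ENNReal.toReal_pow, ENNReal.toReal_inv, ENNReal.toReal_ofNat]
  rfl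

instance (q : ℝ) : IsFiniteMeasure (bern q) := ⟨by simp [bern]⟩

instance {ν : Type*} [Fintype ν] (q : ℝ) : IsFiniteMeasure (μF ν q) := by
  unfold μF; infer_instance

theorem μF_singleton {ν : Type*} [Fintype ν] (q : ℝ) (ω : ν → Bool) :
    μF ν q {ω} = ∏ j, bern q {ω j} := by
  rw [μF, ← Set.univ_pi_singleton, Measure.pi_pi]

theorem μF_real_singleton_comp {ν : Type*} [Fintype ν] (q : ℝ) (σ : Equiv.Perm ν)
    (ω : ν → Bool) : (μF ν q).real {ω ∘ σ} = (μF ν q).real {ω} := by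
  simp only [measureReal_def, μF_singleton, Function.comp_apply,
    Equiv.prod_comp σ fun j => bern q {ω j}]

theorem μF_real_singleton_true_pos {ν : Type*} [Fintype ν] {q : ℝ} (hq : q < 1) :
    0 < (μF ν q).real {fun _ => true} := by
  rw [measureReal_def, μF_singleton, ENNReal.toReal_prod]
  exact Finset.prod_pos fun _ _ => by
    simp [bern, ENNReal.toReal_ofReal (sub_nonneg.2 hq.le), hq]

theorem integral_μF {ν : Type*} [Fintype ν] [DecidableEq ν] (q : ℝ) (g : (ν → Bool) → ℝ) :
    ∫ ω, g ω ∂μF ν q = ∑ ω, (μF ν q).real {ω} * g ω := by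
  simp [integral_fintype (μ := μF ν q) (f := g) Integrable.of_finite]

section HatMatrix

variable {α α' ι ι' : Type*} [Fintype α] [Fintype α'] [Fintype ι] [Fintype ι']
  [DecidableEq ι] [DecidableEq ι']

def hatMat (C : Matrix α ι ℝ) : Matrix α α ℝ := C * (Cᵀ * C)⁻¹ * Cᵀ

theorem hatMat_submatrix_equiv (C : Matrix α ι ℝ) (e₁ : α' ≃ α) (e₂ : ι' ≃ ι) :
    hatMat (C.submatrix e₁ e₂) = (hatMat C).submatrix e₁ e₁ := by
  simp only [hatMat, transpose_submatrix, submatrix_mul_equiv, inv_submatrix_equiv]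

theorem hatMat_orthogonal_mul [DecidableEq α] (C : Matrix α ι ℝ) {S : Matrix α α ℝ}
    (hS : Sᵀ * S = 1) :
    hatMat (S * C) = S * hatMat C * Sᵀ := by
  have hgram : (S * C)ᵀ * (S * C) = Cᵀ * C := by
    rw [transpose_mul, Matrix.mul_assoc, ← Matrix.mul_assoc Sᵀ, hS, Matrix.one_mul]
  rw [hatMat, hgram, transpose_mul, hatMat]
  simp only [Matrix.mul_assoc]

end HatMatrix

section StronglyRegular

variable {V : Type*} [Fintype V] [DecidableEq V] {A : Matrix V V ℝ} {δ lam mu : ℝ}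

theorem mulVec_injective_of_srg (hδ : δ ≠ 0) (hδmu : δ ≠ mu)
    (hreg : ∀ i, ∑ j, A i j = δ)
    (hsrg : A * A = δ • (1 : Matrix V V ℝ) + lam • A + mu • (Matrix.of (fun _ _ => 1) - 1 - A)) :
    Function.Injective A.mulVec := by
  refine (injective_iff_map_eq_zero' A.mulVecLin).2 fun x => ⟨fun hx => ?_, fun hx => by simp [hx]⟩
  simp only [mulVecLin_apply] at hx
  -- `A x = 0` turns the SRG identity into `(δ - μ) x = -μ (∑ x) 𝟙`, and applying `A` once more
  -- shows `μ (∑ x) = 0` because `A 𝟙 = δ 𝟙`.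
  have hcoord : ∀ i, (δ - mu) * x i = -(mu * ∑ j, x j) := by
    intro i
    have h := congrFun (congrArg (· *ᵥ x) hsrg) i
    simp only [← mulVec_mulVec, hx, mulVec_zero, add_mulVec, smul_mulVec, sub_mulVec,
      one_mulVec] at h
    simp [mulVec, dotProduct] at h
    linarith
  funext i
  have hrow : (δ - mu) * (A *ᵥ x) i = δ * -(mu * ∑ j, x j) :=
    calc (δ - mu) * (A *ᵥ x) i = ∑ j, A i j * ((δ - mu) * x j) := by
          rw [mulVec, dotProduct, Finset.mul_sum]
          exact Finset.sum_congr rfl fun j _ => by ring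
      _ = δ * -(mu * ∑ j, x j) := by simp only [hcoord, ← Finset.sum_mul, hreg i]
  rw [hx, Pi.zero_apply, mul_zero, eq_comm, mul_eq_zero, neg_eq_zero] at hrow
  have hsum : mu * ∑ j, x j = 0 := hrow.resolve_left hδ
  simpa [hsum, sub_ne_zero.2 hδmu] using hcoord i

end StronglyRegular

section Encoding

variable {m : ℕ} {κ V : Type*} [Fintype V] [DecidableEq V] {A : Matrix κ V ℝ}

theorem projMat_eq_hatMat_mul [Fintype κ] (B : Matrix (Fin m × κ) V ℝ) {𝓕 : Finset V}
    (h𝓕 : 𝓕 ≠ ∅) :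
    projMat B 𝓕 = hatMat (subCols B 𝓕) * Fmat m κ := by
  simp only [projMat, if_neg h𝓕, hatMat, Matrix.mul_assoc]

theorem Fmat_transpose_mul_apply [Fintype κ] {ι : Type*} (M : Matrix (Fin m × κ) ι ℝ)
    (i : Fin m) (k : ι) : ((Fmat m κ)ᵀ * M) i k = ∑ r, M (i, r) k := by
  simp only [Matrix.mul_apply, Fintype.sum_prod_type, transpose_apply, Fmat, of_apply, ite_mul,
    one_mul, zero_mul]
  rw [Finset.sum_comm]
  simp

theorem projMat_encB_mul_blockSign [Fintype κ] (ε : Fin m → ℝ) (hε : ∀ i, ε i * ε i = 1)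
    (d : Fin m × V → ℝ) (𝓕 : Finset V) (p : Fin m × κ) (k : Fin m) :
    projMat (encB A fun x => ε x.1 * d x) 𝓕 p k = ε p.1 * ε k * projMat (encB A d) 𝓕 p k := by
  classical
  by_cases h𝓕 : 𝓕 = ∅
  · simp [projMat, h𝓕]
  set S : Matrix (Fin m × κ) (Fin m × κ) ℝ := diagonal fun x => ε x.1
  have hsub : subCols (encB A fun x => ε x.1 * d x) 𝓕 = S * subCols (encB A d) 𝓕 := by
    ext x j
    simp only [S, subCols, encB, diagonal_mul, submatrix_apply, of_apply, id_eq]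
    ring
  have hS : Sᵀ * S = 1 := by
    rw [diagonal_transpose, diagonal_mul_diagonal, ← diagonal_one]
    exact congrArg diagonal (funext fun x => hε x.1)
  have hSF : Sᵀ * Fmat m κ = Fmat m κ * diagonal ε := by
    ext x i
    by_cases h : x.1 = i <;> simp [S, Fmat, h]
  rw [projMat_eq_hatMat_mul _ h𝓕, projMat_eq_hatMat_mul _ h𝓕, hsub, hatMat_orthogonal_mul _ hS,
    Matrix.mul_assoc, hSF, ← Matrix.mul_assoc, mul_diagonal]
  simp only [S, Matrix.mul_assoc, diagonal_mul]
  ring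

theorem projMat_encB_reindex [Fintype κ] (π : Equiv.Perm (Fin m)) (τ : Equiv.Perm κ)
    (σ : Equiv.Perm V) (hA : ∀ a b, A (τ a) (σ b) = A a b) (d : Fin m × V → ℝ) {𝓕 𝓕' : Finset V}
    (h𝓕 : ∀ j, j ∈ 𝓕' ↔ σ j ∈ 𝓕) (p : Fin m × κ) (k : Fin m) :
    projMat (encB A fun x => d (π x.1, σ x.2)) 𝓕' p k =
      projMat (encB A d) 𝓕 (π p.1, τ p.2) (π k) := by
  have h𝓕' : 𝓕' = 𝓕.map σ.symm.toEmbedding := by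
    ext j
    simp [h𝓕, Finset.mem_map_equiv]
  by_cases hempty : 𝓕 = ∅
  · simp [projMat, hempty, h𝓕']
  have hempty' : 𝓕' ≠ ∅ := by simpa [h𝓕'] using hempty
  set ψ : Fin m × κ ≃ Fin m × κ := π.prodCongr τ
  have hsub : subCols (encB A fun x => d (π x.1, σ x.2)) 𝓕' =
      (subCols (encB A d) 𝓕).submatrix ψ (σ.subtypeEquiv h𝓕) := by
    ext x j
    simp [ψ, subCols, encB, hA]
  have hF : (Fmat m κ).submatrix ψ π = Fmat m κ := by
    ext x i
    simp [ψ, Fmat]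
  rw [projMat_eq_hatMat_mul _ hempty', projMat_eq_hatMat_mul _ hempty, hsub,
    hatMat_submatrix_equiv]
  conv_lhs => rw [← hF, submatrix_mul_equiv]
  rfl

theorem mulVec_injective_subCols_encB [Nonempty (Fin m)] (hA : Function.Injective A.mulVec)
    {d : Fin m × V → ℝ} (hd : ∀ x, d x ≠ 0) (𝓕 : Finset V) :
    Function.Injective (subCols (encB A d) 𝓕).mulVec := by
  refine (injective_iff_map_eq_zero' (subCols (encB A d) 𝓕).mulVecLin).2
    fun x => ⟨fun hx => ?_, fun hx => by simp [hx]⟩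
  obtain ⟨i⟩ := ‹Nonempty (Fin m)›
  set y : V → ℝ := fun j => if h : j ∈ 𝓕 then d (i, j) * x ⟨j, h⟩ else 0
  have hy : A *ᵥ y = 0 := by
    funext r
    rw [mulVecLin_apply] at hx
    change _ = (0 : Fin m × κ → ℝ) (i, r)
    rw [← hx]
    calc ∑ j, A r j * y j = ∑ j ∈ 𝓕, A r j * y j :=
          (Finset.sum_subset (Finset.subset_univ 𝓕) fun j _ hj => by simp [y, hj]).symm
      _ = ∑ j : 𝓕, A r j * y j := (Finset.sum_coe_sort 𝓕 _).symm
      _ = (subCols (encB A d) 𝓕 *ᵥ x) (i, r) :=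
          Finset.sum_congr rfl fun j _ => by simp [y, subCols, encB, mul_assoc]
  funext j
  simpa [y, hd] using congrFun (hA.eq_iff' (mulVec_zero A) |>.1 hy) j

theorem sum_projMat_encB_pos [Fintype κ] (hA : Function.Injective A.mulVec)
    (hcol : ∀ j, ∑ r, A r j ≠ 0) {d : Fin m × V → ℝ} (hd : ∀ x, d x ≠ 0) {𝓕 : Finset V}
    (h𝓕 : 𝓕 ≠ ∅) (i : Fin m) :
    0 < ∑ r, projMat (encB A d) 𝓕 (i, r) i := by
  have : Nonempty (Fin m) := ⟨i⟩
  set C := subCols (encB A d) 𝓕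
  set X := Cᵀ * Fmat m κ
  have hgram : (Cᵀ * C).PosDef := by
    simpa [conjTranspose_eq_transpose_of_trivial] using
      PosDef.conjTranspose_mul_self C (mulVec_injective_subCols_encB hA hd 𝓕)
  have hX : (fun k => X k i) ≠ 0 := by
    obtain ⟨j, hj⟩ := Finset.nonempty_iff_ne_empty.2 h𝓕
    have hXj : X ⟨j, hj⟩ i = (∑ r, A r j) * d (i, j) :=
      calc X ⟨j, hj⟩ i = ((Fmat m κ)ᵀ * C) i ⟨j, hj⟩ := by
            rw [← transpose_apply ((Fmat m κ)ᵀ * C), transpose_mul, transpose_transpose]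
        _ = (∑ r, A r j) * d (i, j) := by
            rw [Fmat_transpose_mul_apply, Finset.sum_mul]
            rfl
    exact fun h => mul_ne_zero (hcol j) (hd _) (hXj ▸ congrFun h ⟨j, hj⟩)
  have hdiag : ∑ r, projMat (encB A d) 𝓕 (i, r) i = (Xᵀ * (Cᵀ * C)⁻¹ * X) i i := by
    rw [← Fmat_transpose_mul_apply, projMat_eq_hatMat_mul _ h𝓕]
    simp only [X, hatMat, transpose_mul, transpose_transpose, Matrix.mul_assoc]
    rfl
  have hpos := hgram.inv.dotProduct_mulVec_pos hX
  rw [star_trivial, dotProduct_mulVec] at hpos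
  rw [hdiag]
  exact hpos

end Encoding

section Expectation

variable {m : ℕ} {κ V : Type*} [Fintype κ] [Fintype V] [DecidableEq V] (A : Matrix κ V ℝ)
  (q : ℝ)

def expectedProj (p : Fin m × κ) (k : Fin m) : ℝ :=
  ∫ d, ∫ ω, projMat (encB A d) (finsetOf ω) p k ∂μF V q ∂μD m V 0

theorem expectedProj_eq_sum (p : Fin m × κ) (k : Fin m) :
    expectedProj A q p k = (2⁻¹ : ℝ) ^ Fintype.card (Fin m × V) *
      ∑ s, ∑ ω, (μF V q).real {ω} * projMat (encB A (signVec s)) (finsetOf ω) p k := by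
  simp only [expectedProj, integral_μD_zero, integral_μF]

theorem expectedProj_eq_zero_of_ne {p : Fin m × κ} {k : Fin m} (h : p.1 ≠ k) :
    expectedProj A q p k = 0 := by
  set ε : Fin m → ℝ := fun j => if j = k then -1 else 1
  have hε : ∀ j, ε j * ε j = 1 := fun j => by by_cases hj : j = k <;> simp [ε, hj]
  have hflip : Function.Involutive
      fun (s : Fin m × V → Bool) x => if x.1 = k then !s x else s x := by
    intro s; funext x; by_cases hx : x.1 = k <;> simp [hx]
  have hsign : ∀ s, signVec (hflip.toPerm _ s) = fun x => ε x.1 * signVec s x := by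
    intro s; funext x
    by_cases hx : x.1 = k <;> cases hs : s x <;> simp [ε, signVec, hx, hs]
  set T := ∑ s, ∑ ω, (μF V q).real {ω} * projMat (encB A (signVec s)) (finsetOf ω) p k
  have hT : T = -T :=
    calc T = ∑ s, ∑ ω, (μF V q).real {ω} *
          projMat (encB A (signVec (hflip.toPerm _ s))) (finsetOf ω) p k :=
        (Equiv.sum_comp (hflip.toPerm _) _).symm
      _ = -T := by
        simp only [hsign, projMat_encB_mul_blockSign ε hε, ε, if_neg h, if_pos rfl, T,
          ← Finset.sum_neg_distrib]
        ring_nf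
  rw [expectedProj_eq_sum]
  exact mul_eq_zero_of_right _ (by linarith)

theorem expectedProj_reindex (π : Equiv.Perm (Fin m)) (τ : Equiv.Perm κ) (σ : Equiv.Perm V)
    (hA : ∀ a b, A (τ a) (σ b) = A a b) (p : Fin m × κ) (k : Fin m) :
    expectedProj A q (π p.1, τ p.2) (π k) = expectedProj A q p k := by
  set φ : Fin m × V ≃ Fin m × V := π.prodCongr σ
  have hmem : ∀ (ω : V → Bool) j, j ∈ finsetOf (ω ∘ σ) ↔ σ j ∈ finsetOf ω := by
    simp [finsetOf]
  rw [expectedProj_eq_sum, expectedProj_eq_sum]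
  congr 1
  refine Fintype.sum_equiv (φ.symm.arrowCongr (Equiv.refl Bool)) _ _ fun s => ?_
  refine Fintype.sum_equiv (σ.symm.arrowCongr (Equiv.refl Bool)) _ _ fun ω => ?_
  change _ = (μF V q).real {ω ∘ σ} *
    projMat (encB A fun x => signVec s (π x.1, σ x.2)) (finsetOf (ω ∘ σ)) p k
  rw [μF_real_singleton_comp, projMat_encB_reindex π τ σ hA _ (hmem ω)]

theorem sum_expectedProj_pos [Nonempty V] (hA : Function.Injective A.mulVec)
    (hcol : ∀ j, ∑ r, A r j ≠ 0) {q : ℝ} (hq : q < 1) (i : Fin m) :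
    0 < ∑ r, expectedProj A q (i, r) i := by
  have hterm : ∀ s ω, 0 ≤ (μF V q).real {ω} *
      ∑ r, projMat (encB A (signVec s)) (finsetOf ω) (i, r) i := by
    intro s ω
    refine mul_nonneg measureReal_nonneg ?_
    by_cases h : finsetOf ω = ∅
    · simp [projMat, h]
    · exact (sum_projMat_encB_pos hA hcol (signVec_ne_zero s) h i).le
  have hall : finsetOf (fun _ : V => true) ≠ ∅ := by
    simpa [finsetOf] using Finset.univ_nonempty.ne_empty
  have hsum : ∑ r, expectedProj A q (i, r) i = (2⁻¹ : ℝ) ^ Fintype.card (Fin m × V) *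
      ∑ s, ∑ ω, (μF V q).real {ω} * ∑ r, projMat (encB A (signVec s)) (finsetOf ω) (i, r) i := by
    simp only [expectedProj_eq_sum, Finset.mul_sum]
    rw [Finset.sum_comm]
    exact Finset.sum_congr rfl fun s _ => Finset.sum_comm
  have hall_true : 0 < (μF V q).real {fun _ => true} *
      ∑ r, projMat (encB A (signVec fun _ => true)) (finsetOf fun _ => true) (i, r) i :=
    mul_pos (μF_real_singleton_true_pos hq)
      (sum_projMat_encB_pos hA hcol (signVec_ne_zero _) hall i)
  rw [hsum]
  refine mul_pos (by positivity)
    (Finset.sum_pos' (fun s _ => Finset.sum_nonneg fun ω _ => hterm s ω)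
      ⟨fun _ => true, Finset.mem_univ _,
        Finset.sum_pos' (fun ω _ => hterm _ ω) ⟨fun _ => true, Finset.mem_univ _, hall_true⟩⟩)

end Expectation

theorem stmt10_general (n m δ lam mu : ℕ)
    (hδ : 0 < δ) (hδmu : δ ≠ mu)
    (q : ℝ) (hq1 : q < 1)
    (A : Matrix (Fin n) (Fin n) ℝ)
    (hsym : Aᵀ = A)
    (hreg : ∀ i, ∑ j, A i j = (δ : ℝ))
    (hsrg : A * A = (δ : ℝ) • (1 : Matrix (Fin n) (Fin n) ℝ) + (lam : ℝ) • A +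
        (mu : ℝ) • (Matrix.of (fun _ _ => 1) - 1 - A))
    (htrans : ∀ u v : Fin n, ∃ σ : Equiv.Perm (Fin n),
      σ u = v ∧ ∀ i j, A (σ i) (σ j) = A i j) :
    ∃ β : ℝ, β ≠ 0 ∧ ∀ (r : Fin m × Fin n) (i : Fin m),
      (∫ d, ∫ ω, projMat (encB A d) (finsetOf ω) r i ∂(μF (Fin n) q)
          ∂(μD m (Fin n) 0)) =
        β * Fmat m (Fin n) r i := by
  rcases isEmpty_or_nonempty (Fin m × Fin n) with hempty | ⟨i₀, v₀⟩
  · exact ⟨1, one_ne_zero, fun r => isEmptyElim r⟩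
  have hA : Function.Injective A.mulVec :=
    mulVec_injective_of_srg (by exact_mod_cast hδ.ne') (by exact_mod_cast hδmu) hreg hsrg
  have hcol : ∀ j, ∑ r, A r j ≠ 0 := fun j => by
    have hrow : ∑ r, A r j = ∑ r, A j r :=
      Finset.sum_congr rfl fun r _ => (congrFun (congrFun hsym j) r : _)
    rw [hrow, hreg j]
    exact_mod_cast hδ.ne'
  have hdiag : ∀ (i : Fin m) (v : Fin n),
      expectedProj A q (i, v) i = expectedProj A q (i₀, v₀) i₀ := by
    intro i v
    obtain ⟨σ, hσv, hσ⟩ := htrans v v₀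
    simpa [hσv] using (expectedProj_reindex A q (Equiv.swap i i₀) σ σ hσ (i, v) i).symm
  refine ⟨expectedProj A q (i₀, v₀) i₀, fun hβ => ?_, fun ⟨i, v⟩ k => ?_⟩
  · have : Nonempty (Fin n) := ⟨v₀⟩
    simpa [hdiag, hβ] using sum_expectedProj_pos A hA hcol hq1 i₀
  · change expectedProj A q (i, v) k = _
    by_cases h : i = k
    · subst h
      simp [Fmat, hdiag]
    · simp [Fmat, h, expectedProj_eq_zero_of_ne A q (p := (i, v)) h]

/-- Corollary 4: for the adjacency matrix of a vertex-transitive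
strongly regular graph (`0 < δ ≠ μ`) and the random-diagonal construction with
`ε = 0`, the expected decoded matrix equals `β F`, `β ≠ 0`. -/
theorem stmt10 (n m δ lam mu : ℕ) (hm : 0 < m)
    (hδ : 0 < δ) (hδmu : δ ≠ mu)
    (q : ℝ) (hq0 : 0 ≤ q) (hq1 : q < 1)
    (A : Matrix (Fin n) (Fin n) ℝ)
    (hsym : Aᵀ = A)
    (hbin : ∀ i j, A i j = 0 ∨ A i j = 1)
    (hloop : ∀ i, A i i = 0)
    (hreg : ∀ i, ∑ j, A i j = (δ : ℝ))
    (hsrg : A * A = (δ : ℝ) • (1 : Matrix (Fin n) (Fin n) ℝ) + (lam : ℝ) • A +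
        (mu : ℝ) • (Matrix.of (fun _ _ => 1) - 1 - A))
    (hnonempty : ∃ i j, A i j = 1)
    (hnoncomplete : ∃ i j, i ≠ j ∧ A i j = 0)
    (htrans : ∀ u v : Fin n, ∃ σ : Equiv.Perm (Fin n),
      σ u = v ∧ ∀ i j, A (σ i) (σ j) = A i j) :
    ∃ β : ℝ, β ≠ 0 ∧ ∀ (r : Fin m × Fin n) (i : Fin m),
      (∫ d, ∫ ω, projMat (encB A d) (finsetOf ω) r i ∂(μF (Fin n) q)
          ∂(μD m (Fin n) 0)) =
        β * Fmat m (Fin n) r i :=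
  stmt10_general n m δ lam mu hδ hδmu q hq1 A hsym hreg hsrg htrans

end
end

section
/- Let p be a prime, a ≥ 1 an integer, and k = p^a. Let T ⊆ {0,1,…,k−1} with |T| = δ and p not dividing δ. Then for every complex k-th root of unity ζ, the sum Σ_{j∈T} ζ^j is nonzero; consequently, the k×k circulant matrix C whose first row is the 0/1 indicator vector of T (with each subsequent row the cyclic shift of the previous one by one position) is invertible. -/
/-! If `ζ^(p^a) = 1` and `ζ ≠ 1`, then `ζ` is a primitive `p^b`-th root of unity with `b ≥ 1`, so
the cyclotomic polynomial `Φ_{p^b}` divides the mask polynomial `∑_{j ∈ T} X^j` in `ℤ[X]`.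
Evaluating at `1`, where `Φ_{p^b}(1) = p`, gives `p ∣ |T|`; for `ζ = 1` the sum is `|T| ≠ 0`.
Invertibility of the circulant matrix follows because its determinant is the product of these
sums over the `k`-th roots of unity: the matrix `(ω^(r i))_{i,r}` diagonalizes it. -/

open Matrix Polynomial Finset

theorem IsPrimitiveRoot.cyclotomic_dvd_of_aeval_eq_zero {K : Type*} [Field K] [CharZero K]
    {ζ : K} {n : ℕ} (hζ : IsPrimitiveRoot ζ n) (hn : 0 < n) {P : ℤ[X]} (hP : aeval ζ P = 0) :
    cyclotomic n ℤ ∣ P := by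
  rw [cyclotomic_eq_minpoly hζ hn]
  exact minpoly.isIntegrallyClosed_dvd (hζ.isIntegral hn) hP

theorem prime_dvd_eval_one_of_aeval_eq_zero {K : Type*} [Field K] [CharZero K] {p a : ℕ}
    (hp : p.Prime) {ζ : K} (hζ : ζ ^ p ^ a = 1) (hζ1 : ζ ≠ 1) {P : ℤ[X]} (hP : aeval ζ P = 0) :
    (p : ℤ) ∣ P.eval 1 := by
  have := Fact.mk hp
  obtain ⟨b, -, hb⟩ := (Nat.dvd_prime_pow hp).mp (orderOf_dvd_of_pow_eq_one hζ)
  obtain ⟨b, rfl⟩ : ∃ c, b = c + 1 :=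
    Nat.exists_eq_add_one.mpr (Nat.pos_of_ne_zero fun h => hζ1 (by simpa [h] using hb))
  have hprim : IsPrimitiveRoot ζ (p ^ (b + 1)) := hb ▸ IsPrimitiveRoot.orderOf ζ
  obtain ⟨Q, rfl⟩ := hprim.cyclotomic_dvd_of_aeval_eq_zero (pow_pos hp.pos _) hP
  rw [eval_mul, eval_one_cyclotomic_prime_pow]
  exact dvd_mul_right _ _

theorem sum_pow_ne_zero_of_pow_prime_pow_eq_one {K : Type*} [Field K] [CharZero K] {p a : ℕ}
    (hp : p.Prime) {ζ : K} (hζ : ζ ^ p ^ a = 1) {ι : Type*} (s : Finset ι) (f : ι → ℕ)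
    (hs : ¬ p ∣ #s) : ∑ i ∈ s, ζ ^ f i ≠ 0 := by
  intro hsum
  by_cases hζ1 : ζ = 1
  · subst hζ1
    simp only [one_pow, sum_const, nsmul_eq_mul, mul_one, Nat.cast_eq_zero] at hsum
    exact hs (hsum ▸ dvd_zero p)
  · apply hs
    have hP : aeval ζ (∑ i ∈ s, X ^ f i : ℤ[X]) = 0 := by simpa using hsum
    simpa [eval_finsetSum, Int.natCast_dvd_natCast] using
      prime_dvd_eval_one_of_aeval_eq_zero hp hζ hζ1 hP

lemma pow_zmod_val_add {M : Type*} [CommMonoid M] {k : ℕ} [NeZero k] {ω : M} (hω : ω ^ k = 1)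
    (a b : ZMod k) : ω ^ (a + b).val = ω ^ a.val * ω ^ b.val :=
  (AddChar.zmodChar k hω).map_add_eq_mul a b

lemma pow_pow_zmod_val_eq_one {M : Type*} [CommMonoid M] {k : ℕ} {ω : M} (hω : ω ^ k = 1)
    (r : ZMod k) : (ω ^ r.val) ^ k = 1 := by
  rw [← pow_mul, mul_comm, pow_mul, hω, one_pow]

namespace Matrix

variable {K : Type*} [Field K] {k : ℕ} [NeZero k] {ω : K}

variable (k) in
def dftMatrix (ω : K) : Matrix (ZMod k) (ZMod k) K :=
  of fun i r => (ω ^ r.val) ^ i.val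

lemma transpose_circulant_mul_dftMatrix (hω : ω ^ k = 1) (v : ZMod k → K) :
    (circulant v)ᵀ * dftMatrix k ω =
      dftMatrix k ω * diagonal fun r => ∑ j, v j * (ω ^ r.val) ^ j.val := by
  ext i r
  have hr := pow_pow_zmod_val_eq_one hω r
  rw [mul_apply, mul_diagonal]
  calc ∑ j, v (j - i) * (ω ^ r.val) ^ j.val
      = ∑ m, v m * (ω ^ r.val) ^ (m + i).val :=
        (Fintype.sum_equiv (Equiv.addRight i) _ _ fun m => by simp).symm
    _ = (ω ^ r.val) ^ i.val * ∑ j, v j * (ω ^ r.val) ^ j.val := by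
        simp only [pow_zmod_val_add hr, mul_sum]
        exact sum_congr rfl fun _ _ => by ring

lemma det_dftMatrix_ne_zero (hω : IsPrimitiveRoot ω k) : (dftMatrix k ω).det ≠ 0 := by
  have hcol : ∀ i : Fin k, (ZMod.finEquiv k i).val = i := by
    obtain ⟨n, rfl⟩ := Nat.exists_eq_add_one_of_ne_zero (NeZero.ne k)
    exact fun _ => rfl
  have hW : (dftMatrix k ω).submatrix (ZMod.finEquiv k) (ZMod.finEquiv k) =
      (vandermonde fun r : Fin k => ω ^ (r : ℕ))ᵀ := by
    ext i r
    simp [dftMatrix, hcol]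
  rw [← det_submatrix_equiv_self (ZMod.finEquiv k).toEquiv, RingEquiv.toEquiv_eq_coe,
    RingEquiv.coe_toEquiv, hW, det_transpose]
  exact det_vandermonde_ne_zero_iff.mpr fun i j h => Fin.ext (hω.pow_inj i.isLt j.isLt h)

theorem det_circulant (hω : IsPrimitiveRoot ω k) (v : ZMod k → K) :
    (circulant v).det = ∏ r : ZMod k, ∑ j, v j * (ω ^ r.val) ^ j.val := by
  have h := congrArg det (transpose_circulant_mul_dftMatrix hω.pow_eq_one v)
  rw [det_mul, det_mul, det_transpose, det_diagonal, mul_comm] at h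
  exact mul_left_cancel₀ (det_dftMatrix_ne_zero hω) h

theorem det_circulant_ne_zero (hω : IsPrimitiveRoot ω k) (v : ZMod k → K)
    (hv : ∀ ζ : K, ζ ^ k = 1 → ∑ j, v j * ζ ^ j.val ≠ 0) : (circulant v).det ≠ 0 := by
  rw [det_circulant hω]
  exact prod_ne_zero_iff.mpr fun r _ => hv _ (pow_pow_zmod_val_eq_one hω.pow_eq_one r)

end Matrix

theorem stmt12_general (p a k δ : ℕ) (hp : p.Prime) (hk : k = p ^ a)
    [NeZero k] (hpδ : ¬ p ∣ δ)
    (T : Finset (ZMod k)) (hT : T.card = δ) :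
    (∀ ζ : ℂ, ζ ^ k = 1 → ∑ j ∈ T, ζ ^ (ZMod.val j) ≠ 0) ∧
    IsUnit (Matrix.of fun i j : ZMod k => if j - i ∈ T then (1 : ℝ) else 0).det := by
  have hsum : ∀ ζ : ℂ, ζ ^ k = 1 → ∑ j ∈ T, ζ ^ (ZMod.val j) ≠ 0 := fun ζ hζ =>
    sum_pow_ne_zero_of_pow_prime_pow_eq_one hp (hk ▸ hζ) T _ (hT ▸ hpδ)
  refine ⟨hsum, ?_⟩
  -- Mathlib's `circulant v` has entries `v (i - j)`; the matrix here is its transpose.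
  set v : ZMod k → ℝ := fun j => if j ∈ T then 1 else 0
  have hC : (of fun i j : ZMod k => if j - i ∈ T then (1 : ℝ) else 0) = (circulant v)ᵀ := rfl
  rw [hC, det_transpose, isUnit_iff_ne_zero, ← (algebraMap ℝ ℂ).injective.ne_iff, map_zero,
    RingHom.map_det, RingHom.mapMatrix_apply, map_circulant]
  refine det_circulant_ne_zero (Complex.isPrimitiveRoot_exp k (NeZero.ne k)) _ fun ζ hζ => ?_
  simpa [v, apply_ite] using hsum ζ hζ

/-- for `k = p^a` (`p` prime) and `T ⊆ ℤ_k` of size `δ` with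
`p ∤ δ`, every `k`-th root of unity `ζ` satisfies `∑_{j ∈ T} ζ^j ≠ 0`, and the
`k × k` circulant matrix with first row the indicator of `T` is invertible. -/
theorem stmt12 (p a k δ : ℕ) (hp : p.Prime) (ha : 1 ≤ a) (hk : k = p ^ a)
    [NeZero k] (hpδ : ¬ p ∣ δ)
    (T : Finset (ZMod k)) (hT : T.card = δ) :
    (∀ ζ : ℂ, ζ ^ k = 1 → ∑ j ∈ T, ζ ^ (ZMod.val j) ≠ 0) ∧
    IsUnit (Matrix.of fun i j : ZMod k => if j - i ∈ T then (1 : ℝ) else 0).det :=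
  stmt12_general p a k δ hp hk hpδ T hT
end
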